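/- (Lemma 2, case h = ∞, H ∈ ℝ.) For the problem with boundary conditions y(0) = 0 and y'(1) + H·y(1) − γ₁·y(ξ₁) = 0, the eigenfunction φ(·,λₙ) = S(·,λₙ) corresponding to the eigenvalue λₙ satisfies, for sufficiently large n and uniformly for x ∈ [0,1], φ(x,λₙ) = sin(kₙx)/kₙ − (cos(kₙx)/kₙ²)·Q(x) + O(1/kₙ³), where kₙ = √λₙ. -/

import Mathlib

/-! Variation of constants turns the initial value problem into the Volterra equation
`y(x) = sin(κx)/κ + ∫₀ˣ q(t) y(t) sin(κ(x-t))/κ dt`, whose kernel is `O(1/κ)`.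
A maximum-norm argument gives `y = O(1/κ)`; substituting twice gives
`y(x) = sin(κx)/κ + κ⁻² ∫₀ˣ q(t) sin(κt) sin(κ(x-t)) dt + O(κ⁻³)`.
By product-to-sum, that integral is `-cos(κx) Q(x)` plus half of `∫₀ˣ q(t) cos(κ(x-2t)) dt`,
which is `O(1/κ)` after one integration by parts because `q` is `C¹`.
Finally `kₙ` is eventually real and tends to `+∞`, since `kₙ² = λₙ` is real and
`kₙ ≈ (n + 1/2)π`. -/

open Set Filter Asymptotics

/-- `y`, with derivative `y'`, solves `-y'' + q y = lam y` on `[0,1]`. -/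
def IsSLSolution (q : ℝ → ℝ) (lam : ℂ) (y y' : ℝ → ℂ) : Prop :=
  (∀ x ∈ Set.Icc (0:ℝ) 1, HasDerivWithinAt y (y' x) (Set.Icc 0 1) x) ∧
  (∀ x ∈ Set.Icc (0:ℝ) 1, HasDerivWithinAt y' (((q x : ℂ) - lam) * y x) (Set.Icc 0 1) x)

/-- The boundary form `V(y) = y'(1) + H y(1) - γ₁ y(ξ₁)`. -/
def Vform (H γ1 ξ1 : ℝ) (y y' : ℝ → ℂ) : ℂ := y' 1 + (H:ℂ) * y 1 - (γ1:ℂ) * y ξ1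

/-- `lam` enumerates the zeros of `Δ` (the eigenvalues), ordered by modulus. -/
def EnumeratesZeros (Δ : ℂ → ℂ) (lam : ℕ → ℂ) : Prop :=
  Function.Injective lam ∧ (∀ n, Δ (lam n) = 0) ∧ (∀ μ : ℂ, Δ μ = 0 → ∃ n, lam n = μ) ∧
    Monotone fun n => ‖lam n‖

open intervalIntegral

theorem Complex.norm_sin_ofReal_le_one (r : ℝ) : ‖Complex.sin r‖ ≤ 1 := by
  rw [← Complex.ofReal_sin, Complex.norm_real, Real.norm_eq_abs]
  exact Real.abs_sin_le_one r

theorem intervalIntegral.integral_eq_sub_of_hasDerivWithinAt_Icc {E : Type*}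
    [NormedAddCommGroup E] [NormedSpace ℝ E] [CompleteSpace E] {f f' : ℝ → E} {a b : ℝ}
    (hab : a ≤ b) (hf : ∀ t ∈ Icc a b, HasDerivWithinAt f (f' t) (Icc a b) t)
    (hf' : ContinuousOn f' (Icc a b)) :
    ∫ t in a..b, f' t = f b - f a :=
  integral_eq_sub_of_hasDerivAt_of_le hab (fun t ht => (hf t ht).continuousWithinAt)
    (fun t ht => (hf t (Ioo_subset_Icc_self ht)).hasDerivAt (Icc_mem_nhds ht.1 ht.2))
    (hf'.intervalIntegrable_of_Icc hab)

theorem abs_integral_mul_cos_le {f f' : ℝ → ℝ} {a b C C' ω φ : ℝ} (hab : a ≤ b)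
    (hω : ω ≠ 0) (hf : ∀ t ∈ Icc a b, HasDerivWithinAt f (f' t) (Icc a b) t)
    (hf' : ContinuousOn f' (Icc a b))
    (hC : ∀ t ∈ Icc a b, |f t| ≤ C) (hC' : ∀ t ∈ Icc a b, |f' t| ≤ C') :
    |∫ t in a..b, f t * Real.cos (ω * t + φ)| ≤ (2 * C + (b - a) * C') / |ω| := by
  have hv : ∀ t ∈ uIcc a b, HasDerivWithinAt (fun t => Real.sin (ω * t + φ) / ω)
      (Real.cos (ω * t + φ)) (uIcc a b) t := fun t _ => by
    have h := (((hasDerivAt_id t).const_mul ω).add_const φ).sin.div_const ω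
    rw [mul_one, mul_div_cancel_right₀ _ hω] at h
    exact h.hasDerivWithinAt
  rw [integral_mul_deriv_eq_deriv_mul_of_hasDerivWithinAt (by rwa [uIcc_of_le hab]) hv
    (hf'.intervalIntegrable_of_Icc hab)
    ((by fun_prop : Continuous fun t => Real.cos (ω * t + φ)).intervalIntegrable _ _)]
  have hsin : ∀ t, |Real.sin (ω * t + φ) / ω| ≤ 1 / |ω| := fun t => by
    rw [abs_div]; gcongr; exact Real.abs_sin_le_one _
  have hint :
      |∫ t in a..b, f' t * (Real.sin (ω * t + φ) / ω)| ≤ C' * (1 / |ω|) * |b - a| := by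
    rw [← Real.norm_eq_abs]
    refine norm_integral_le_of_norm_le_const fun t ht => ?_
    rw [uIoc_of_le hab] at ht
    rw [Real.norm_eq_abs, abs_mul]
    exact mul_le_mul (hC' t (Ioc_subset_Icc_self ht)) (hsin t) (abs_nonneg _)
      ((abs_nonneg _).trans (hC' t (Ioc_subset_Icc_self ht)))
  have hend : ∀ t ∈ Icc a b, |f t * (Real.sin (ω * t + φ) / ω)| ≤ C * (1 / |ω|) :=
    fun t ht => by
    rw [abs_mul]
    exact mul_le_mul (hC t ht) (hsin t) (abs_nonneg _) ((abs_nonneg _).trans (hC t ht))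
  calc _ ≤ |f b * (Real.sin (ω * b + φ) / ω)| + |f a * (Real.sin (ω * a + φ) / ω)|
        + |∫ t in a..b, f' t * (Real.sin (ω * t + φ) / ω)| :=
        (abs_sub _ _).trans (add_le_add_left (abs_sub _ _) _)
    _ ≤ C * (1 / |ω|) + C * (1 / |ω|) + C' * (1 / |ω|) * |b - a| := by
        gcongr
        exacts [hend b (right_mem_Icc.2 hab), hend a (left_mem_Icc.2 hab)]
    _ = (2 * C + (b - a) * C') / |ω| := by rw [abs_of_nonneg (sub_nonneg.2 hab)]; ring

noncomputable def volterraSin (q : ℝ → ℝ) (κ : ℂ) (z : ℝ → ℂ) (x : ℝ) : ℂ :=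
  ∫ t in (0:ℝ)..x, (q t : ℂ) * z t * Complex.sin (κ * (x - t)) / κ

section Volterra

variable {q : ℝ → ℝ} {κ : ℂ} {x : ℝ}

theorem continuousOn_volterraSin_integrand {z : ℝ → ℂ} (hq : ContinuousOn q (Icc 0 1))
    (hz : ContinuousOn z (Icc 0 1)) :
    ContinuousOn (fun t : ℝ => (q t : ℂ) * z t * Complex.sin (κ * (x - t)) / κ) (Icc 0 1) :=
  (((Complex.continuous_ofReal.comp_continuousOn hq).mul hz).mul
    (by fun_prop : Continuous fun t : ℝ => Complex.sin (κ * (x - t))).continuousOn).div_const κ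

theorem IsSLSolution.eq_sin_div_add_volterraSin {y y' : ℝ → ℂ} (hq : ContinuousOn q (Icc 0 1))
    (hκ : κ ≠ 0) (hy : IsSLSolution q (κ ^ 2) y y') (hy0 : y 0 = 0) (hy'0 : y' 0 = 1)
    (hx : x ∈ Icc (0:ℝ) 1) :
    y x = Complex.sin (κ * x) / κ + volterraSin q κ y x := by
  have hIcc : Icc 0 x ⊆ Icc (0:ℝ) 1 := Icc_subset_Icc le_rfl hx.2
  -- `F` pairs `y` with the free solution `t ↦ sin(κ(x - t))/κ`, so only `q` survives in `F'`.
  set F : ℝ → ℂ := fun t => y' t * Complex.sin (κ * (x - t)) / κ + y t * Complex.cos (κ * (x - t))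
  have hF : ∀ t ∈ Icc 0 x, HasDerivWithinAt F
      ((q t : ℂ) * y t * Complex.sin (κ * (x - t)) / κ) (Icc 0 x) t := by
    intro t ht
    have harg : HasDerivAt (fun u : ℝ => κ * ((x : ℂ) - u)) (-κ) t := by
      simpa using (((hasDerivAt_id (t : ℂ)).const_sub (x : ℂ)).const_mul κ).comp_ofReal
    have hsin := (Complex.hasDerivAt_sin _).comp t harg
    have hcos := (Complex.hasDerivAt_cos _).comp t harg
    have h := (((hy.2 t (hIcc ht)).mul hsin.hasDerivWithinAt).div_const κ).add
      ((hy.1 t (hIcc ht)).mul hcos.hasDerivWithinAt)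
    refine (h.mono hIcc).congr_deriv ?_
    simp only [Function.comp_apply]
    field_simp
    ring
  have hFTC := integral_eq_sub_of_hasDerivWithinAt_Icc hx.1 hF
    ((continuousOn_volterraSin_integrand hq (fun t ht => (hy.1 t ht).continuousWithinAt)).mono hIcc)
  simp only [F, sub_self, mul_zero, Complex.sin_zero, Complex.cos_zero, zero_div, zero_add,
    mul_one, Complex.ofReal_zero, sub_zero, zero_mul, hy0, hy'0, one_mul] at hFTC
  rw [volterraSin, hFTC]
  ring

theorem volterraSin_sub {y z : ℝ → ℂ} (hq : ContinuousOn q (Icc 0 1))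
    (hy : ContinuousOn y (Icc 0 1)) (hz : ContinuousOn z (Icc 0 1)) (hx : x ∈ Icc (0:ℝ) 1) :
    volterraSin q κ y x - volterraSin q κ z x = volterraSin q κ (y - z) x := by
  have hint : ∀ w : ℝ → ℂ, ContinuousOn w (Icc 0 1) → IntervalIntegrable
      (fun t : ℝ => (q t : ℂ) * w t * Complex.sin (κ * (x - t)) / κ) MeasureTheory.volume 0 x :=
    fun w hw => ((continuousOn_volterraSin_integrand hq hw).mono
      (Icc_subset_Icc le_rfl hx.2)).intervalIntegrable_of_Icc hx.1
  rw [volterraSin, volterraSin, ← integral_sub (hint y hy) (hint z hz), volterraSin]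
  congr 1 with t
  simp only [Pi.sub_apply]
  ring

end Volterra

section RealFrequency

variable {q : ℝ → ℝ} {κ C x : ℝ}

theorem norm_volterraSin_le {z : ℝ → ℂ} {D : ℝ} (hκ : 0 < κ)
    (hq : ∀ t ∈ Icc (0:ℝ) 1, |q t| ≤ C) (hz : ∀ t ∈ Icc (0:ℝ) 1, ‖z t‖ ≤ D)
    (hx : x ∈ Icc (0:ℝ) 1) :
    ‖volterraSin q κ z x‖ ≤ C * D / κ := by
  have h0 : (0:ℝ) ∈ Icc (0:ℝ) 1 := left_mem_Icc.2 zero_le_one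
  have hC : 0 ≤ C := (abs_nonneg _).trans (hq 0 h0)
  have hD : 0 ≤ D := (norm_nonneg _).trans (hz 0 h0)
  refine (norm_integral_le_of_norm_le_const fun t ht => ?_).trans
    (mul_le_of_le_one_right (by positivity) (by rw [sub_zero, abs_of_nonneg hx.1]; exact hx.2))
  rw [uIoc_of_le hx.1] at ht
  have ht' : t ∈ Icc (0:ℝ) 1 := ⟨ht.1.le, ht.2.trans hx.2⟩
  have harg : (κ : ℂ) * ((x : ℂ) - t) = ((κ * (x - t) : ℝ) : ℂ) := by push_cast; ring
  rw [harg, norm_div, norm_mul, norm_mul, Complex.norm_real, Complex.norm_real, Real.norm_eq_abs,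
    Real.norm_eq_abs, abs_of_pos hκ]
  calc |q t| * ‖z t‖ * ‖Complex.sin ((κ * (x - t) : ℝ) : ℂ)‖ / κ ≤ C * D * 1 / κ := by
        gcongr
        exacts [hq t ht', hz t ht', Complex.norm_sin_ofReal_le_one _]
    _ = C * D / κ := by ring

theorem norm_le_two_div_of_eq_sin_div_add_volterraSin {y : ℝ → ℂ} (hκ : 0 < κ) (hCκ : 2 * C ≤ κ)
    (hq : ∀ t ∈ Icc (0:ℝ) 1, |q t| ≤ C) (hy : ContinuousOn y (Icc 0 1))
    (hIE : ∀ x ∈ Icc (0:ℝ) 1, y x = Complex.sin (κ * x) / κ + volterraSin q κ y x)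
    {t : ℝ} (ht : t ∈ Icc (0:ℝ) 1) :
    ‖y t‖ ≤ 2 / κ := by
  obtain ⟨t₀, ht₀, hmax⟩ :=
    isCompact_Icc.exists_isMaxOn (nonempty_Icc.2 zero_le_one) hy.norm
  have hB : ∀ s ∈ Icc (0:ℝ) 1, ‖y s‖ ≤ ‖y t₀‖ := fun s hs => hmax hs
  have hsin : ‖Complex.sin (κ * t₀) / κ‖ ≤ 1 / κ := by
    rw [norm_div, ← Complex.ofReal_mul, Complex.norm_real, Real.norm_eq_abs, abs_of_pos hκ]
    gcongr
    exact Complex.norm_sin_ofReal_le_one _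
  have hrec : ‖y t₀‖ ≤ 1 / κ + C * ‖y t₀‖ / κ := by
    calc ‖y t₀‖ ≤ ‖Complex.sin (κ * t₀) / κ‖ + ‖volterraSin q κ y t₀‖ := by
          rw [hIE t₀ ht₀]; exact norm_add_le _ _
      _ ≤ _ := add_le_add hsin (norm_volterraSin_le hκ hq hB ht₀)
  have hhalf : C * ‖y t₀‖ / κ ≤ ‖y t₀‖ / 2 := by
    rw [div_le_div_iff₀ hκ two_pos]
    nlinarith [norm_nonneg (y t₀)]
  calc ‖y t‖ ≤ ‖y t₀‖ := hB t ht
    _ ≤ 2 / κ := by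
        have : 1 / κ * 2 = 2 / κ := by ring
        linarith

theorem volterraSin_sin_div (hq : ContinuousOn q (Icc 0 1)) (hx : x ∈ Icc (0:ℝ) 1) :
    volterraSin q κ (fun t => Complex.sin (κ * t) / κ) x =
      (((1/2) * ∫ t in (0:ℝ)..x, q t * Real.cos (-2 * κ * t + κ * x)) -
        Real.cos (κ * x) * ((1/2) * ∫ t in (0:ℝ)..x, q t) : ℝ) / (κ : ℂ) ^ 2 := by
  have hqx : ContinuousOn q (Icc 0 x) := hq.mono (Icc_subset_Icc le_rfl hx.2)
  have hprod : ∀ t : ℝ, q t * Real.sin (κ * t) * Real.sin (κ * (x - t)) =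
      (1/2) * (q t * Real.cos (-2 * κ * t + κ * x)) - Real.cos (κ * x) * ((1/2) * q t) := by
    intro t
    have h1 : Real.cos (-2 * κ * t + κ * x) = Real.cos (κ * t - κ * (x - t)) := by
      rw [← Real.cos_neg]; ring_nf
    rw [h1, show κ * x = κ * t + κ * (x - t) by ring, Real.cos_sub, Real.cos_add]
    ring
  have hcast : ∀ t : ℝ, (q t : ℂ) * (Complex.sin (κ * t) / κ) * Complex.sin (κ * (x - t)) / κ =
      ((q t * Real.sin (κ * t) * Real.sin (κ * (x - t)) : ℝ) : ℂ) / (κ : ℂ) ^ 2 := by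
    intro t
    push_cast
    ring
  simp_rw [volterraSin, hcast, hprod]
  rw [integral_div, integral_ofReal, integral_sub, integral_const_mul, integral_const_mul,
    integral_const_mul]
  · exact ((hqx.mul (by fun_prop : Continuous fun t => Real.cos (-2 * κ * t + κ * x)).continuousOn
      ).intervalIntegrable_of_Icc hx.1).const_mul _
  · exact ((hqx.intervalIntegrable_of_Icc hx.1).const_mul _).const_mul _

theorem IsSLSolution.norm_sub_sin_div_sub_cos_div_sq_le {q' : ℝ → ℝ} {C' : ℝ} {y y' : ℝ → ℂ}
    (hq : ∀ t ∈ Icc (0:ℝ) 1, HasDerivWithinAt q (q' t) (Icc 0 1) t)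
    (hq' : ContinuousOn q' (Icc 0 1)) (hC : ∀ t ∈ Icc (0:ℝ) 1, |q t| ≤ C)
    (hC' : ∀ t ∈ Icc (0:ℝ) 1, |q' t| ≤ C') (hκ : 0 < κ) (hCκ : 2 * C ≤ κ)
    (hy : IsSLSolution q ((κ : ℂ) ^ 2) y y') (hy0 : y 0 = 0) (hy'0 : y' 0 = 1)
    (hx : x ∈ Icc (0:ℝ) 1) :
    ‖y x - (Complex.sin (κ * x) / κ -
        Complex.cos (κ * x) / κ ^ 2 * (((1/2) * ∫ t in (0:ℝ)..x, q t : ℝ) : ℂ))‖ ≤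
      (2 * C ^ 2 + (2 * C + C') / 4) / κ ^ 3 := by
  have hqc : ContinuousOn q (Icc 0 1) := fun t ht => (hq t ht).continuousWithinAt
  have hyc : ContinuousOn y (Icc 0 1) := fun t ht => (hy.1 t ht).continuousWithinAt
  have hIE : ∀ x ∈ Icc (0:ℝ) 1, y x = Complex.sin (κ * x) / κ + volterraSin q κ y x :=
    fun x hx => hy.eq_sin_div_add_volterraSin hqc (by exact_mod_cast hκ.ne') hy0 hy'0 hx
  set u : ℝ → ℂ := fun t => Complex.sin (κ * t) / κ
  have hyu : ∀ t ∈ Icc (0:ℝ) 1, ‖(y - u) t‖ ≤ 2 * C / κ ^ 2 := by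
    intro t ht
    rw [Pi.sub_apply, hIE t ht, add_sub_cancel_left]
    refine (norm_volterraSin_le hκ hC
      (fun s hs => norm_le_two_div_of_eq_sin_div_add_volterraSin hκ hCκ hC hyc hIE hs) ht).trans
      (le_of_eq ?_)
    field_simp
  have hsecond := norm_volterraSin_le hκ hC hyu hx
  rw [← volterraSin_sub hqc hyc (by fun_prop) hx, volterraSin_sin_div hqc hx] at hsecond
  set J := ∫ t in (0:ℝ)..x, q t * Real.cos (-2 * κ * t + κ * x)
  have hJ : |J| ≤ (2 * C + C') / (2 * κ) := by
    have hsub : Icc 0 x ⊆ Icc (0:ℝ) 1 := Icc_subset_Icc le_rfl hx.2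
    have h := abs_integral_mul_cos_le (φ := κ * x) hx.1 (by linarith : -2 * κ ≠ 0)
      (fun t ht => (hq t (hsub ht)).mono hsub) (hq'.mono hsub) (fun t ht => hC t (hsub ht))
      (fun t ht => hC' t (hsub ht))
    have hC'0 : 0 ≤ C' := (abs_nonneg _).trans (hC' 0 (left_mem_Icc.2 zero_le_one))
    rw [abs_of_neg (by linarith : -2 * κ < 0), sub_zero] at h
    calc |J| ≤ (2 * C + x * C') / -(-2 * κ) := h
      _ ≤ (2 * C + C') / (2 * κ) := by
          rw [neg_mul, neg_neg]
          gcongr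
          nlinarith [hx.2]
  have hdecomp : y x - (Complex.sin (κ * x) / κ -
        Complex.cos (κ * x) / κ ^ 2 * (((1/2) * ∫ t in (0:ℝ)..x, q t : ℝ) : ℂ)) =
      (volterraSin q κ y x - (((1/2) * J - Real.cos (κ * x) * ((1/2) * ∫ t in (0:ℝ)..x, q t) : ℝ)
        / (κ : ℂ) ^ 2)) + ((1/2) * J : ℝ) / (κ : ℂ) ^ 2 := by
    rw [hIE x hx, ← Complex.ofReal_mul, ← Complex.ofReal_cos]
    push_cast
    ring
  have hJκ : ‖(((1/2) * J : ℝ) : ℂ) / (κ : ℂ) ^ 2‖ ≤ (2 * C + C') / 4 / κ ^ 3 := by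
    rw [norm_div, norm_pow, Complex.norm_real, Complex.norm_real, Real.norm_eq_abs,
      Real.norm_eq_abs, abs_of_pos hκ, abs_mul, abs_of_pos one_half_pos]
    calc 1 / 2 * |J| / κ ^ 2 ≤ 1 / 2 * ((2 * C + C') / (2 * κ)) / κ ^ 2 := by gcongr
      _ = (2 * C + C') / 4 / κ ^ 3 := by field_simp; ring
  rw [hdecomp, add_div]
  refine (norm_add_le _ _).trans (add_le_add (hsecond.trans (le_of_eq ?_)) hJκ)
  field_simp

theorem exists_isSLSolution_asymptotics (hq : ContDiffOn ℝ 1 q (Icc 0 1)) :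
    ∃ M > 0, ∀ᶠ κ : ℝ in atTop, ∀ y y' : ℝ → ℂ, IsSLSolution q ((κ : ℂ) ^ 2) y y' →
      y 0 = 0 → y' 0 = 1 → ∀ x ∈ Icc (0:ℝ) 1,
        ‖y x - (Complex.sin (κ * x) / κ -
          Complex.cos (κ * x) / κ ^ 2 * (((1/2) * ∫ t in (0:ℝ)..x, q t : ℝ) : ℂ))‖ ≤ M / κ ^ 3 := by
  have h0 : (0:ℝ) ∈ Icc (0:ℝ) 1 := left_mem_Icc.2 zero_le_one
  have hq' := hq.continuousOn_derivWithin (uniqueDiffOn_Icc one_pos) le_rfl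
  obtain ⟨C, hC⟩ := isCompact_Icc.exists_bound_of_continuousOn hq.continuousOn
  obtain ⟨C', hC'⟩ := isCompact_Icc.exists_bound_of_continuousOn hq'
  have hC0 : 0 ≤ C := (norm_nonneg _).trans (hC 0 h0)
  have hC'0 : 0 ≤ C' := (norm_nonneg _).trans (hC' 0 h0)
  refine ⟨2 * C ^ 2 + (2 * C + C') / 4 + 1, by positivity, ?_⟩
  filter_upwards [eventually_ge_atTop (2 * C), eventually_gt_atTop 0]
    with κ hCκ hκ y y' hy hy0 hy'0 x hx
  refine (hy.norm_sub_sin_div_sub_cos_div_sq_le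
    (fun t ht => ((hq.differentiableOn one_ne_zero) t ht).hasDerivWithinAt) hq' hC hC' hκ hCκ
    hy0 hy'0 hx).trans ?_
  gcongr ?_ / _
  linarith

end RealFrequency

theorem Complex.im_eq_zero_of_im_sq_eq_zero {z : ℂ} (hre : 0 < z.re) (h : (z ^ 2).im = 0) :
    z.im = 0 := by
  rw [sq, Complex.mul_im] at h
  exact (mul_eq_zero.1 (by linarith : z.re * z.im = 0)).resolve_left hre.ne'

theorem tendsto_re_atTop_of_norm_sub_le {k : ℕ → ℂ} {c : ℝ} {N : ℕ}
    (hk : ∀ n ≥ N, ‖k n - (((n + 1/2) * Real.pi : ℝ) : ℂ)‖ ≤ c / n) :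
    Tendsto (fun n => (k n).re) atTop atTop := by
  have hlow : ∀ᶠ n : ℕ in atTop, n * Real.pi - |c| ≤ (k n).re := by
    filter_upwards [eventually_ge_atTop (max N 1)] with n hn
    have hn1 : (1:ℝ) ≤ n := by exact_mod_cast (le_max_right _ _).trans hn
    have hdist := (Complex.abs_re_le_norm _).trans (hk n ((le_max_left _ _).trans hn))
    rw [Complex.sub_re, Complex.ofReal_re] at hdist
    have hc : c / n ≤ |c| :=
      (div_le_div_of_nonneg_right (le_abs_self c) (by positivity)).trans
        (div_le_self (abs_nonneg c) hn1)
    linarith [(abs_le.1 hdist).1, Real.pi_pos]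
  exact tendsto_atTop_mono' atTop hlow
    (tendsto_atTop_add_const_right _ _ (tendsto_natCast_atTop_atTop.atTop_mul_const Real.pi_pos))

theorem stmt_8_general
    (q : ℝ → ℝ) (hq : ContDiffOn ℝ 1 q (Set.Icc 0 1))
    (S S' : ℂ → ℝ → ℂ)
    (hsolS : ∀ lam : ℂ, IsSLSolution q lam (S lam) (S' lam))
    (hS0 : ∀ lam : ℂ, S lam 0 = 0) (hS'0 : ∀ lam : ℂ, S' lam 0 = 1)
    (lam : ℕ → ℂ)
    (hreal : ∀ᶠ n in atTop, (lam n).im = 0)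
    (k : ℕ → ℂ) (hk2 : ∀ n, k n ^ 2 = lam n)
    (hkasym : ∃ (c : ℝ) (N : ℕ), ∀ n ≥ N, ‖k n - (((n + 1/2) * Real.pi : ℝ) : ℂ)‖ ≤ c / n) :
    ∃ (M : ℝ) (N : ℕ), 0 < M ∧ ∀ n ≥ N, ∀ x ∈ Set.Icc (0:ℝ) 1,
      ‖S (lam n) x -
        (Complex.sin (k n * (x:ℂ)) / k n -
          Complex.cos (k n * (x:ℂ)) / k n ^ 2 * (((1/2) * ∫ t in (0:ℝ)..x, q t : ℝ) : ℂ))‖ ≤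
        M / ‖k n‖ ^ 3 := by
  obtain ⟨M, hM, hasym⟩ := exists_isSLSolution_asymptotics hq
  obtain ⟨c, N, hc⟩ := hkasym
  have hre := tendsto_re_atTop_of_norm_sub_le hc
  obtain ⟨N', hN'⟩ :=
    eventually_atTop.1 (((hre.eventually hasym).and (hre.eventually_gt_atTop 0)).and hreal)
  refine ⟨M, N', hM, fun n hn x hx => ?_⟩
  obtain ⟨⟨hasym_n, hpos⟩, him⟩ := hN' n hn
  have hk : k n = ((k n).re : ℂ) :=
    Complex.ext rfl (Complex.im_eq_zero_of_im_sq_eq_zero hpos (by rw [hk2]; exact him))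
  have hsol : IsSLSolution q (((k n).re : ℂ) ^ 2) (S (lam n)) (S' (lam n)) := by
    rw [← hk, hk2]; exact hsolS _
  rw [hk, Complex.norm_real, Real.norm_eq_abs, abs_of_pos hpos]
  exact hasym_n _ _ hsol (hS0 _) (hS'0 _) x hx

/-- Lemma 2, case `h = ∞`, `H ∈ ℝ`: for the problem with `y(0) = 0` and
`y'(1) + H y(1) - γ₁ y(ξ₁) = 0`, the eigenfunction `φ(·,λₙ) = S(·,λₙ)` satisfies, for large `n`
and uniformly for `x ∈ [0,1]`,
`φ(x,λₙ) = sin(kₙx)/kₙ - (cos(kₙx)/kₙ²) Q(x) + O(1/kₙ³)`. -/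
theorem stmt_8
    (q : ℝ → ℝ) (hq : ContDiffOn ℝ 1 q (Set.Icc 0 1))
    (H γ1 : ℝ) (hγ1 : γ1 ≠ 0)
    (ξ1 : ℚ) (hξ1 : (ξ1:ℝ) ∈ Set.Ioo 0 1)
    (S S' : ℂ → ℝ → ℂ)
    (hsolS : ∀ lam : ℂ, IsSLSolution q lam (S lam) (S' lam))
    (hS0 : ∀ lam : ℂ, S lam 0 = 0) (hS'0 : ∀ lam : ℂ, S' lam 0 = 1)
    (Δ : ℂ → ℂ)
    (hΔ : ∀ lam : ℂ, Δ lam = Vform H γ1 ξ1 (S lam) (S' lam))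
    (lam : ℕ → ℂ) (hen : EnumeratesZeros Δ lam)
    (hreal : ∀ᶠ n in atTop, (lam n).im = 0)
    (k : ℕ → ℂ) (hk2 : ∀ n, k n ^ 2 = lam n)
    (hkasym : ∃ (c : ℝ) (N : ℕ), ∀ n ≥ N, ‖k n - (((n + 1/2) * Real.pi : ℝ) : ℂ)‖ ≤ c / n) :
    ∃ (M : ℝ) (N : ℕ), 0 < M ∧ ∀ n ≥ N, ∀ x ∈ Set.Icc (0:ℝ) 1,
      ‖S (lam n) x -
        (Complex.sin (k n * (x:ℂ)) / k n -
          Complex.cos (k n * (x:ℂ)) / k n ^ 2 * (((1/2) * ∫ t in (0:ℝ)..x, q t : ℝ) : ℂ))‖ ≤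
        M / ‖k n‖ ^ 3 :=
  stmt_8_general q hq S S' hsolS hS0 hS'0 lam hreal k hk2 hkasym
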